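/- Let F : ℝ → ℂ be twice continuously differentiable with |F''(s)| ≤ C for all s ∈ [−a, a], where a > 0. Then for all X > 0, |∫_{−a}^{a} e^{−X s²} F(s) ds − F(0) ∫_{−a}^{a} e^{−X s²} ds − F'(0) ∫_{−a}^{a} e^{−X s²} s ds| ≤ (C/2) ∫_{−∞}^{∞} e^{−X s²} s² ds = (C/2)·(√π/2)·X^{−3/2}. -/

import Mathlib

/-!
Since `F'` is `C`-Lipschitz on `[-a, a]`, the Taylor remainder
`R s = F s - F 0 - s F'(0) = ∫₀ˢ (F' t - F' 0) dt` satisfies `‖R s‖ ≤ (C/2) s²`.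
The left-hand side is `‖∫_{-a}^{a} e^{-X s²} R s ds‖`, hence at most `C/2` times the full Gaussian
second moment `∫_ℝ s² e^{-X s²} ds = Γ(3/2) X^{-3/2} = (√π/2) X^{-3/2}`.
-/

open MeasureTheory Real Set

theorem abs_integral_abs (s : ℝ) : |∫ t in (0 : ℝ)..s, (|t|)| = s ^ 2 / 2 := by
  wlog hs : 0 ≤ s generalizing s
  · have hneg : ∫ t in (0 : ℝ)..s, |t| = -∫ t in (0 : ℝ)..-s, |t| := by
      simpa [intervalIntegral.integral_symm (-s)] using
        intervalIntegral.integral_comp_neg (a := 0) (b := s) fun t => |t|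
    rw [hneg, abs_neg, this (-s) (by linarith), neg_sq]
  have hid : ∫ t in (0 : ℝ)..s, |t| = ∫ t in (0 : ℝ)..s, t :=
    intervalIntegral.integral_congr fun t ht => abs_of_nonneg (uIcc_of_le hs ▸ ht).1
  rw [hid, integral_id, zero_pow two_ne_zero, sub_zero, abs_of_nonneg (by positivity)]

section

variable {E : Type*} [NormedAddCommGroup E] [NormedSpace ℝ E]

theorem norm_sub_sub_smul_deriv_le [CompleteSpace E] {f : ℝ → E} (hf : ContDiff ℝ 2 f) {s C : ℝ}
    (hC : ∀ t ∈ uIcc 0 s, ‖deriv (deriv f) t‖ ≤ C) :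
    ‖f s - f 0 - s • deriv f 0‖ ≤ C / 2 * s ^ 2 := by
  have hf' : ContDiff ℝ 1 (deriv f) := hf.deriv'
  have hC0 : 0 ≤ C := (norm_nonneg _).trans (hC 0 left_mem_uIcc)
  have hlip : ∀ t ∈ uIcc 0 s, ‖deriv f t - deriv f 0‖ ≤ C * |t| := fun t ht => by
    simpa using (convex_uIcc 0 s).norm_image_sub_le_of_norm_deriv_le
      (fun x _ => (hf'.differentiable one_ne_zero).differentiableAt) hC left_mem_uIcc ht
  have hrem : f s - f 0 - s • deriv f 0 = ∫ t in (0 : ℝ)..s, (deriv f t - deriv f 0) := by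
    rw [intervalIntegral.integral_sub (hf'.continuous.intervalIntegrable _ _)
        intervalIntegrable_const,
      intervalIntegral.integral_deriv_eq_sub
        (fun t _ => (hf.differentiable two_ne_zero).differentiableAt)
        (hf'.continuous.intervalIntegrable _ _),
      intervalIntegral.integral_const, sub_zero]
  calc ‖f s - f 0 - s • deriv f 0‖
      ≤ |∫ t in (0 : ℝ)..s, C * (|t|)| := by
        rw [hrem]
        exact intervalIntegral.norm_integral_le_abs_of_norm_le
          (ae_restrict_of_forall_mem measurableSet_uIoc fun t ht => hlip t (uIoc_subset_uIcc ht))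
          ((continuous_const.mul continuous_abs).intervalIntegrable 0 s)
    _ = C / 2 * s ^ 2 := by
      rw [intervalIntegral.integral_const_mul, abs_mul, abs_integral_abs, abs_of_nonneg hC0]
      ring

theorem norm_intervalIntegral_le_integral_of_norm_le {f : ℝ → E} {g : ℝ → ℝ} {a b : ℝ}
    (hab : a ≤ b) (hfg : ∀ t ∈ Icc a b, ‖f t‖ ≤ g t) (hg0 : 0 ≤ g) (hg : Integrable g) :
    ‖∫ t in a..b, f t‖ ≤ ∫ t, g t :=
  calc ‖∫ t in a..b, f t‖ ≤ ∫ t in a..b, g t :=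
        intervalIntegral.norm_integral_le_of_norm_le hab
          (Filter.Eventually.of_forall fun t ht => hfg t (Ioc_subset_Icc_self ht))
          hg.intervalIntegrable
    _ ≤ ∫ t, g t := by
        rw [intervalIntegral.integral_of_le hab]
        exact setIntegral_le_integral hg (Filter.Eventually.of_forall hg0)

end

theorem integrable_sq_mul_exp_neg_mul_sq {b : ℝ} (hb : 0 < b) :
    Integrable fun x : ℝ => x ^ 2 * exp (-b * x ^ 2) := by
  simpa [rpow_two] using integrable_rpow_mul_exp_neg_mul_sq hb (s := 2) (by norm_num)

theorem integral_sq_mul_exp_neg_mul_sq {b : ℝ} (hb : 0 < b) :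
    ∫ x : ℝ, x ^ 2 * exp (-b * x ^ 2) = √π / 2 * b ^ (-(3 : ℝ) / 2) := by
  have hΓ : Gamma ((2 + 1) / 2) = √π / 2 := by
    convert Gamma_nat_add_one_add_half 0 using 2 <;> norm_num
  calc ∫ x : ℝ, x ^ 2 * exp (-b * x ^ 2)
      = ∫ x : ℝ, |x| ^ (2 : ℝ) * exp (-b * |x| ^ (2 : ℝ)) := by simp
    _ = √π / 2 * b ^ (-(3 : ℝ) / 2) := by
      rw [integral_comp_abs (f := fun x => x ^ (2 : ℝ) * exp (-b * x ^ (2 : ℝ))),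
        integral_rpow_mul_exp_neg_mul_rpow two_pos (by norm_num) hb, hΓ]
      ring_nf

theorem stmt9 (F : ℝ → ℂ) (hF : ContDiff ℝ 2 F) (a C : ℝ) (ha : 0 < a)
    (hC : ∀ s ∈ Set.Icc (-a) a, ‖deriv (deriv F) s‖ ≤ C) (X : ℝ) (hX : 0 < X) :
    ‖(∫ s in (-a)..a, (Real.exp (-X * s ^ 2) : ℂ) * F s) -
        F 0 * (∫ s in (-a)..a, (Real.exp (-X * s ^ 2) : ℂ)) -
        deriv F 0 * ∫ s in (-a)..a, (Real.exp (-X * s ^ 2) : ℂ) * s‖ ≤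
      (C / 2) * (Real.sqrt π / 2) * X ^ (-(3 : ℝ) / 2) := by
  have hC0 : 0 ≤ C := (norm_nonneg _).trans (hC 0 ⟨by linarith, ha.le⟩)
  have hlin : (∫ s in (-a)..a, (exp (-X * s ^ 2) : ℂ) * F s) -
        F 0 * (∫ s in (-a)..a, (exp (-X * s ^ 2) : ℂ)) -
        deriv F 0 * ∫ s in (-a)..a, (exp (-X * s ^ 2) : ℂ) * s =
      ∫ s in (-a)..a, (exp (-X * s ^ 2) : ℂ) * (F s - F 0 - s • deriv F 0) := by
    have hexpand : (fun s : ℝ => (exp (-X * s ^ 2) : ℂ) * (F s - F 0 - s • deriv F 0)) =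
        fun s => (exp (-X * s ^ 2) : ℂ) * F s - F 0 * (exp (-X * s ^ 2) : ℂ) -
          deriv F 0 * ((exp (-X * s ^ 2) : ℂ) * s) :=
      funext fun s => by rw [Complex.real_smul]; ring
    rw [hexpand, intervalIntegral.integral_sub, intervalIntegral.integral_sub,
      intervalIntegral.integral_const_mul, intervalIntegral.integral_const_mul]
    all_goals exact Continuous.intervalIntegrable (by fun_prop) _ _
  have hpt : ∀ s ∈ Icc (-a) a, ‖(exp (-X * s ^ 2) : ℂ) * (F s - F 0 - s • deriv F 0)‖ ≤
      C / 2 * (s ^ 2 * exp (-X * s ^ 2)) := fun s hs => by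
    have hsub : uIcc 0 s ⊆ Icc (-a) a := uIcc_subset_Icc ⟨by linarith, ha.le⟩ hs
    rw [norm_mul, Complex.norm_real, norm_of_nonneg (exp_pos _).le]
    exact (mul_le_mul_of_nonneg_left (norm_sub_sub_smul_deriv_le hF fun t ht => hC t (hsub ht))
      (exp_pos _).le).trans_eq (by ring)
  calc _ = ‖∫ s in (-a)..a, (exp (-X * s ^ 2) : ℂ) * (F s - F 0 - s • deriv F 0)‖ := by rw [hlin]
    _ ≤ ∫ s, C / 2 * (s ^ 2 * exp (-X * s ^ 2)) :=
      norm_intervalIntegral_le_integral_of_norm_le (by linarith) hpt (fun s => by positivity)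
        ((integrable_sq_mul_exp_neg_mul_sq hX).const_mul _)
    _ = C / 2 * (√π / 2) * X ^ (-(3 : ℝ) / 2) := by
      rw [integral_const_mul, integral_sq_mul_exp_neg_mul_sq hX, mul_assoc]
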